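/- Let k be a field in which -1 is a sum of squares. Then the smallest natural number r such that -1 is a sum of r squares in k (the level of k) is a power of 2. -/

import Mathlib

/-!
Pfister: a sum `x` of `2 ^ n` squares is the multiplier of a similitude `A` of the form `∑ xᵢ²`
on `k ^ (2 ^ n)`, i.e. `Aᵀ A = A Aᵀ = x • 1`. By induction on `n`: if `x = c + d` with `c ≠ 0`,
a similitude `E` with multiplier `d / c` gives the similitude `[[1, E], [-Eᵀ, 1]]` with multiplier
`1 + d / c`, and `c + d = c (1 + d / c)`. Multipliers are closed under products, and each one is a
sum of `2 ^ n` squares (a column norm of `A`), so sums of `2 ^ n` squares are closed under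
division. Now if the level `s` satisfies `2 ^ n ≤ s < 2 ^ (n + 1)`, split `-1 = p + q` with `p`
a sum of `2 ^ n - 1` squares and `q` one of `2 ^ n` squares. By minimality `1 + p ≠ 0`, and
`1 + p` is a sum of `2 ^ n` squares, so `-1 = q / (1 + p)` is one too.
-/

open Matrix

section SumsOfSquares

variable {R : Type*} [Semiring R]

def IsSumOfSquares (r : ℕ) (x : R) : Prop :=
  ∃ f : Fin r → R, x = ∑ i, f i ^ 2

theorem isSumOfSquares_zero (r : ℕ) : IsSumOfSquares r (0 : R) := ⟨0, by simp⟩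

theorem isSumOfSquares_one : IsSumOfSquares 1 (1 : R) := ⟨fun _ => 1, by simp⟩

theorem IsSumOfSquares.add {a b : ℕ} {x y : R} (hx : IsSumOfSquares a x)
    (hy : IsSumOfSquares b y) : IsSumOfSquares (a + b) (x + y) := by
  obtain ⟨f, rfl⟩ := hx
  obtain ⟨g, rfl⟩ := hy
  exact ⟨Fin.append f g, by simp [Fin.sum_univ_add]⟩

theorem IsSumOfSquares.mono {a b : ℕ} {x : R} (hx : IsSumOfSquares a x) (hab : a ≤ b) :
    IsSumOfSquares b x := by
  have h := hx.add (isSumOfSquares_zero (b - a))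
  rwa [add_zero, Nat.add_sub_cancel' hab] at h

theorem IsSumOfSquares.exists_eq_add {a b : ℕ} {x : R} (hx : IsSumOfSquares (a + b) x) :
    ∃ y z, IsSumOfSquares a y ∧ IsSumOfSquares b z ∧ x = y + z := by
  obtain ⟨f, rfl⟩ := hx
  exact ⟨_, _, ⟨fun i => f (Fin.castAdd b i), rfl⟩, ⟨fun i => f (Fin.natAdd a i), rfl⟩,
    Fin.sum_univ_add _⟩

end SumsOfSquares

theorem IsSumOfSquares.pos_of_neg_one {R : Type*} [Ring R] [Nontrivial R] {r : ℕ}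
    (h : IsSumOfSquares r (-1 : R)) : 0 < r := by
  obtain ⟨f, hf⟩ := h
  refine Nat.pos_of_ne_zero fun hr => ?_
  subst hr
  simp at hf

section Similitudes

variable {R : Type*} [CommSemiring R] {ι κ : Type*} [Fintype ι] [DecidableEq ι] [Fintype κ]
  [DecidableEq κ]

variable (ι) in
/-- `A Aᵀ = x • 1` is required too because `IsSimilitudeFactor.one_add_sum` needs it; over a field
it follows from `Aᵀ A = x • 1` unless `x = 0`. -/
def IsSimilitudeFactor (x : R) : Prop :=
  ∃ A : Matrix ι ι R, Aᵀ * A = x • 1 ∧ A * Aᵀ = x • 1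

theorem IsSimilitudeFactor.mul {x y : R} (hx : IsSimilitudeFactor ι x)
    (hy : IsSimilitudeFactor ι y) : IsSimilitudeFactor ι (x * y) := by
  obtain ⟨A, hA, hA'⟩ := hx
  obtain ⟨B, hB, hB'⟩ := hy
  refine ⟨A * B, ?_, ?_⟩
  · rw [transpose_mul, mul_assoc, ← mul_assoc Aᵀ, hA, smul_mul_assoc, Matrix.one_mul,
      mul_smul_comm, hB, smul_smul]
  · rw [transpose_mul, mul_assoc, ← mul_assoc B, hB', smul_mul_assoc, Matrix.one_mul,
      mul_smul_comm, hA', smul_smul, mul_comm]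

theorem isSimilitudeFactor_sq (a : R) : IsSimilitudeFactor ι (a ^ 2) := by
  refine ⟨a • 1, ?_, ?_⟩ <;>
  · rw [transpose_smul, transpose_one, smul_mul_smul_comm, Matrix.one_mul, sq]

theorem IsSimilitudeFactor.reindex (e : ι ≃ κ) {x : R} (hx : IsSimilitudeFactor ι x) :
    IsSimilitudeFactor κ x := by
  obtain ⟨A, hA, hA'⟩ := hx
  refine ⟨A.submatrix e.symm e.symm, ?_, ?_⟩ <;>
  simp [transpose_submatrix, submatrix_mul_equiv, hA, hA', Matrix.submatrix_smul]

theorem IsSimilitudeFactor.sum_self {x : R} (hx : IsSimilitudeFactor ι x) :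
    IsSimilitudeFactor (ι ⊕ ι) x := by
  obtain ⟨A, hA, hA'⟩ := hx
  refine ⟨fromBlocks A 0 0 A, ?_, ?_⟩ <;>
  · simp [fromBlocks_transpose, fromBlocks_multiply, hA, hA', ← fromBlocks_one, fromBlocks_smul]

theorem IsSimilitudeFactor.isSumOfSquares {r : ℕ} {x : R} (hx : IsSimilitudeFactor (Fin r) x)
    (hr : 0 < r) : IsSumOfSquares r x := by
  obtain ⟨A, hA, -⟩ := hx
  refine ⟨fun j => A j ⟨0, hr⟩, ?_⟩
  have h := congr_fun₂ hA ⟨0, hr⟩ ⟨0, hr⟩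
  simp only [mul_apply, transpose_apply, Matrix.smul_apply, one_apply_eq, smul_eq_mul,
    mul_one] at h
  simp only [← h, sq]

end Similitudes

theorem IsSimilitudeFactor.one_add_sum {R : Type*} [CommRing R] {ι : Type*} [Fintype ι]
    [DecidableEq ι] {e : R} (he : IsSimilitudeFactor ι e) :
    IsSimilitudeFactor (ι ⊕ ι) (1 + e) := by
  obtain ⟨E, hE, hE'⟩ := he
  have h1e : (1 + e) • (1 : Matrix ι ι R) = 1 + e • 1 := by rw [add_smul, one_smul]
  refine ⟨fromBlocks 1 E (-Eᵀ) 1, ?_, ?_⟩ <;>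
  · rw [fromBlocks_transpose, fromBlocks_multiply, ← fromBlocks_one, fromBlocks_smul, h1e]
    simp [hE, hE', add_comm]

section Field

variable {k : Type*} [Field k]

theorem IsSumOfSquares.isSimilitudeFactor {n : ℕ} {x : k} (hx : IsSumOfSquares (2 ^ n) x) :
    IsSimilitudeFactor (Fin (2 ^ n)) x := by
  induction n generalizing x with
  | zero =>
    obtain ⟨f, rfl⟩ := hx
    simpa using isSimilitudeFactor_sq (f 0)
  | succ n ih =>
    rw [Nat.two_pow_succ] at hx
    obtain ⟨c, d, hc, hd, rfl⟩ := hx.exists_eq_add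
    refine .reindex (finSumFinEquiv.trans (finCongr (Nat.two_pow_succ n).symm)) ?_
    rcases eq_or_ne c 0 with rfl | hc0
    · simpa using (ih hd).sum_self
    have hdc : IsSimilitudeFactor (Fin (2 ^ n)) (d / c) := by
      have h := ((ih hd).mul (ih hc)).mul (isSimilitudeFactor_sq c⁻¹)
      rwa [show d * c * c⁻¹ ^ 2 = d / c by field_simp] at h
    have h := (ih hc).sum_self.mul hdc.one_add_sum
    rwa [show c * (1 + d / c) = c + d by field_simp] at h

theorem IsSumOfSquares.div {n : ℕ} {x y : k} (hx : IsSumOfSquares (2 ^ n) x)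
    (hy : IsSumOfSquares (2 ^ n) y) : IsSumOfSquares (2 ^ n) (x / y) := by
  have h := (hx.isSimilitudeFactor.mul hy.isSimilitudeFactor).mul (isSimilitudeFactor_sq y⁻¹)
  rw [show x * y * y⁻¹ ^ 2 = x / y by rcases eq_or_ne y 0 with rfl | hy0 <;> field_simp] at h
  exact h.isSumOfSquares (Nat.two_pow_pos n)

theorem IsSumOfSquares.neg_one_two_pow_sub_one_or_two_pow {n : ℕ}
    (h : IsSumOfSquares (2 ^ n - 1 + 2 ^ n) (-1 : k)) :
    IsSumOfSquares (2 ^ n - 1) (-1 : k) ∨ IsSumOfSquares (2 ^ n) (-1 : k) := by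
  obtain ⟨p, q, hp, hq, hpq⟩ := h.exists_eq_add
  have hu : IsSumOfSquares (2 ^ n) (1 + p) := by
    simpa [Nat.add_sub_cancel' Nat.one_le_two_pow] using isSumOfSquares_one.add hp
  by_cases hu0 : 1 + p = 0
  · left
    rwa [← eq_neg_of_add_eq_zero_right hu0]
  · right
    have hq' : q = -(1 + p) := by linear_combination -hpq
    have h := hq.div hu
    rwa [hq', neg_div, div_self hu0] at h

end Field

/-- Pfister: if `-1` is a sum of squares in a field `k`, then the level of `k`
(the least number `r ≥ 1` such that `-1` is a sum of `r` squares) is a power of `2`. -/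
theorem stmt1 (k : Type*) [Field k]
    (h : ∃ r : ℕ, 1 ≤ r ∧ ∃ f : Fin r → k, (-1 : k) = ∑ i, f i ^ 2) :
    ∃ n : ℕ, sInf {r : ℕ | 1 ≤ r ∧ ∃ f : Fin r → k, (-1 : k) = ∑ i, f i ^ 2} = 2 ^ n := by
  change ∃ n : ℕ, sInf {r : ℕ | 1 ≤ r ∧ IsSumOfSquares r (-1 : k)} = 2 ^ n
  set s := sInf {r : ℕ | 1 ≤ r ∧ IsSumOfSquares r (-1 : k)}
  have hmin (r : ℕ) (hr : IsSumOfSquares r (-1 : k)) : s ≤ r :=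
    Nat.sInf_le ⟨hr.pos_of_neg_one, hr⟩
  obtain ⟨hs1, hs⟩ : 1 ≤ s ∧ IsSumOfSquares s (-1 : k) := Nat.sInf_mem h
  set n := Nat.log 2 s
  have hlow : 2 ^ n ≤ s := Nat.pow_log_le_self 2 (by omega)
  have hhigh : s < 2 ^ n + 2 ^ n := by
    simpa [Nat.two_pow_succ] using Nat.lt_pow_succ_log_self one_lt_two s
  refine ⟨n, le_antisymm ?_ hlow⟩
  rcases (hs.mono (b := 2 ^ n - 1 + 2 ^ n) (by omega)).neg_one_two_pow_sub_one_or_two_pow with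
    hfewer | hpow
  · have := hmin _ hfewer
    have := hfewer.pos_of_neg_one
    omega
  · exact hmin _ hpow
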